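/- arXiv:1506.04789 — 2 statements merged into one kernel-verified Lean document; each statement's English description precedes it below -/
import Mathlib

section
/- Let X be a compact metric space, ι a finite index set, and S : ι → Set X a generalized stratification of X with the NDR property. Let A ⊆ X be a closed subset and let ε > 0. Then there exist pairwise disjoint sets P_i ⊆ X (i ∈ ι) with ⋃_{i ∈ ι} P_i = A, and a real number δ > 0, such that: (1) for every i ∈ ι and every x ∈ P_i there exists y ∈ S_i with dist(x, y) < ε; (2) whenever i and j are incomparable strata, one has dist(x, y) > δ for all x ∈ P_i and y ∈ P_j, dist(x, y) > δ for all x ∈ P_i and y ∈ S_j, and dist(x, y) > δ for all x ∈ S_i and y ∈ P_j; (3) for every i ∈ ι there exist an open set U ⊆ X with S_i ⊆ U and a continuous map H : U × [0,1] → X with H(u, 0) = u for all u ∈ U, H(u, 1) ∈ S_i for all u ∈ U, and H(s, t) = s for all s ∈ S_i and t ∈ [0,1], such that every a ∈ A with dist(a, p) < δ for some p ∈ P_i belongs to U. -/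
/-- The "limits-to" relation of a family of strata: `i ⟶ j` (for `i ≠ j`)
when `S j` meets the closure of `S i`. -/
def limitsTo {X : Type*} [TopologicalSpace X] {ι : Type*} (S : ι → Set X)
    (i j : ι) : Prop :=
  i ≠ j ∧ (S j ∩ closure (S i)).Nonempty

/-- `j ≼ i` iff there is a (possibly empty) directed path from `i` to `j`
in the limits-to relation. Strata `i` and `j` are *incomparable* if
neither `i ≼ j` nor `j ≼ i`. -/
def incomparable {X : Type*} [TopologicalSpace X] {ι : Type*} (S : ι → Set X)
    (i j : ι) : Prop :=
  ¬ Relation.ReflTransGen (limitsTo S) i j ∧ ¬ Relation.ReflTransGen (limitsTo S) j i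

open Metric Set Relation

section Aux

set_option linter.unusedSectionVars false

variable {X : Type*} [MetricSpace X] [CompactSpace X] {ι : Type*}

lemma incomparable_symm {S : ι → Set X} {i j : ι} (h : incomparable S i j) :
    incomparable S j i := ⟨h.2, h.1⟩

lemma mem_cthick_iff {E : Set X} (hE : E.Nonempty) {t : ℝ} (ht : 0 ≤ t) {x : X} :
    x ∈ cthickening t E ↔ infDist x E ≤ t := by
  rw [mem_cthickening_iff]
  exact ENNReal.le_ofReal_iff_toReal_le (Metric.infEdist_ne_top hE) ht

/-- Workhorse compactness lemma. -/
lemma L2 {E F V : Set X} (hE : E.Nonempty) (hF : F.Nonempty) (hV : IsOpen V)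
    (h : closure E ∩ closure F ⊆ V) :
    ∃ t > 0, cthickening t E ∩ cthickening t F ⊆ V := by
  rcases eq_empty_or_nonempty Vᶜ with hD | hD
  · exact ⟨1, one_pos, fun x _ => by
      by_contra hx
      exact (eq_empty_iff_forall_notMem.1 hD x) hx⟩
  · have hDc : IsCompact Vᶜ := (hV.isClosed_compl).isCompact
    set g : X → ℝ := fun x => max (infDist x E) (infDist x F) with hg
    have hgc : Continuous g := (continuous_infDist_pt E).max (continuous_infDist_pt F)
    obtain ⟨x₀, hx₀, hmin⟩ := hDc.exists_isMinOn hD hgc.continuousOn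
    have hx₀pos : 0 < g x₀ := by
      by_contra hc
      push_neg at hc
      have h1 : infDist x₀ E ≤ 0 := le_trans (le_max_left _ _) hc
      have h2 : infDist x₀ F ≤ 0 := le_trans (le_max_right _ _) hc
      have hxE : x₀ ∈ closure E :=
        (mem_closure_iff_infDist_zero hE).2 (le_antisymm h1 infDist_nonneg)
      have hxF : x₀ ∈ closure F :=
        (mem_closure_iff_infDist_zero hF).2 (le_antisymm h2 infDist_nonneg)
      exact hx₀ (h ⟨hxE, hxF⟩)
    refine ⟨g x₀ / 2, by linarith, fun x hx => ?_⟩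
    by_contra hxV
    have hxE : infDist x E ≤ g x₀ / 2 :=
      (mem_cthick_iff hE (by linarith)).1 hx.1
    have hxF : infDist x F ≤ g x₀ / 2 :=
      (mem_cthick_iff hF (by linarith)).1 hx.2
    have : g x₀ ≤ g x := hmin hxV
    have : g x ≤ g x₀ / 2 := max_le hxE hxF
    linarith

variable (S : ι → Set X)

/-- Fact A: the closure of a stratum is contained in the stratum together with
the strata strictly below it. -/
lemma closure_subset_below (hcover : (⋃ i, S i) = Set.univ) (i : ι) :
    closure (S i) ⊆ S i ∪ ⋃ (j : ι) (_ : Relation.TransGen (limitsTo S) i j), S j := by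
  intro x hx
  have : x ∈ ⋃ k, S k := by rw [hcover]; trivial
  obtain ⟨k, hk⟩ := mem_iUnion.1 this
  by_cases hki : k = i
  · exact Or.inl (hki ▸ hk)
  · refine Or.inr (mem_iUnion.2 ⟨k, mem_iUnion.2 ⟨?_, hk⟩⟩)
    exact Relation.TransGen.single ⟨fun h => hki h.symm, ⟨x, hk, hx⟩⟩

/-- Fact B: closures of incomparable strata intersect only inside strata
strictly below the first one. -/
lemma closure_inter_closure_subset (hcover : (⋃ i, S i) = Set.univ) {i j : ι}
    (hij : incomparable S i j) :
    closure (S i) ∩ closure (S j) ⊆ ⋃ (k : ι) (_ : Relation.TransGen (limitsTo S) i k), S k := by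
  intro x ⟨hxi, hxj⟩
  have : x ∈ ⋃ k, S k := by rw [hcover]; trivial
  obtain ⟨k, hk⟩ := mem_iUnion.1 this
  by_cases hki : k = i
  · subst hki
    exact absurd (Relation.ReflTransGen.single ⟨fun h => hij.2 (h ▸ Relation.ReflTransGen.refl),
      ⟨x, hk, hxj⟩⟩) hij.2
  · by_cases hkj : k = j
    · subst hkj
      exact absurd (Relation.ReflTransGen.single ⟨fun h => hij.1 (h ▸ Relation.ReflTransGen.refl),
        ⟨x, hk, hxi⟩⟩) hij.1
    · exact mem_iUnion.2 ⟨k, mem_iUnion.2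
        ⟨Relation.TransGen.single ⟨fun h => hki h.symm, ⟨x, hk, hxi⟩⟩, hk⟩⟩

/-- An injective "priority" function extending the strict order. -/
lemma exists_priority [Fintype ι] (hacyclic : ∀ i, ¬ Relation.TransGen (limitsTo S) i i) :
    ∃ N : ι → ℕ, Function.Injective N ∧
      ∀ a b, Relation.TransGen (limitsTo S) a b → N b < N a := by
  classical
  rcases isEmpty_or_nonempty ι with hι | hι
  · exact ⟨fun _ => 0, fun a => isEmptyElim a, fun a => isEmptyElim a⟩
  set c := Fintype.card ι with hc
  have hc0 : 0 < c := Fintype.card_pos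
  set e := Fintype.equivFin ι with he
  set ρ : ι → ℕ := fun i =>
    (Finset.univ.filter (fun j => Relation.TransGen (limitsTo S) i j)).card with hρ
  have hρmono : ∀ a b, Relation.TransGen (limitsTo S) a b → ρ b < ρ a := by
    intro a b hab
    apply Finset.card_lt_card
    constructor
    · intro k hk
      simp only [Finset.mem_filter, Finset.mem_univ, true_and] at hk ⊢
      exact hab.trans hk
    · intro hsub
      have hb : b ∈ Finset.univ.filter (fun j => Relation.TransGen (limitsTo S) a j) := by
        simp only [Finset.mem_filter, Finset.mem_univ, true_and]; exact hab
      have := hsub hb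
      simp only [Finset.mem_filter, Finset.mem_univ, true_and] at this
      exact hacyclic b this
  refine ⟨fun i => ρ i * c + (e i : ℕ), ?_, ?_⟩
  · intro a b hab
    simp only at hab
    have ha : (e a : ℕ) < c := (e a).2
    have hb : (e b : ℕ) < c := (e b).2
    have da : (ρ a * c + (e a : ℕ)) / c = ρ a := by
      rw [mul_comm, Nat.mul_add_div hc0, Nat.div_eq_of_lt ha, Nat.add_zero]
    have db : (ρ b * c + (e b : ℕ)) / c = ρ b := by
      rw [mul_comm, Nat.mul_add_div hc0, Nat.div_eq_of_lt hb, Nat.add_zero]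
    have h1 : ρ a = ρ b := by rw [← da, ← db, hab]
    have h2 : (e a : ℕ) = (e b : ℕ) := by rw [h1] at hab; omega
    exact e.injective (Fin.ext h2)
  · intro a b hab
    have : ρ b < ρ a := hρmono a b hab
    have hb : (e b : ℕ) < c := (e b).2
    calc ρ b * c + (e b : ℕ) < ρ b * c + c := by omega
    _ = (ρ b + 1) * c := by ring
    _ ≤ ρ a * c := Nat.mul_le_mul_right c this
    _ ≤ ρ a * c + (e a : ℕ) := Nat.le_add_right _ _

end Aux

section Main

set_option linter.unusedSectionVars false

variable {X : Type*} [MetricSpace X] [CompactSpace X] {ι : Type*}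

/-- Union of small open thickenings of the strata strictly below `i`. -/
def Wset (S : ι → Set X) (r : ι → ℝ) (i : ι) : Set X :=
  ⋃ (j : ι) (_ : Relation.TransGen (limitsTo S) i j), thickening (r j) (S j)

/-- Closed thickening of stratum `i` minus the thickenings of lower strata. -/
def Cset (S : ι → Set X) (r : ι → ℝ) (i : ι) : Set X :=
  cthickening (r i) (S i) \ Wset S r i

/-- All conditions required of the radius function at stage `i`. -/
def Good (S : ι → Set X) (N : ι → ℕ) (U : ι → Set X) (ε : ℝ) (r : ι → ℝ) (i : ι) : Prop :=
  0 < r i ∧ r i < ε ∧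
  Cset S r i ⊆ U i ∧
  (∀ j, incomparable S i j → ∃ t > 0,
     cthickening (r i) (S i) ∩ cthickening t (S j) ⊆ Wset S r i) ∧
  (∀ j, incomparable S i j → N j < N i → Cset S r i ∩ Cset S r j = ∅)

lemma Wset_congr (S : ι → Set X) {r r' : ι → ℝ} {i : ι}
    (h : ∀ j, Relation.TransGen (limitsTo S) i j → r j = r' j) :
    Wset S r i = Wset S r' i := by
  unfold Wset
  apply iUnion_congr
  intro j
  by_cases hj : Relation.TransGen (limitsTo S) i j
  · simp only [hj, iUnion_true, h j hj]
  · simp only [hj, iUnion_false]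

lemma isOpen_Wset (S : ι → Set X) (r : ι → ℝ) (i : ι) : IsOpen (Wset S r i) :=
  isOpen_iUnion fun _ => isOpen_iUnion fun _ => isOpen_thickening

lemma isClosed_Cset (S : ι → Set X) (r : ι → ℝ) (i : ι) : IsClosed (Cset S r i) :=
  isClosed_cthickening.sdiff (isOpen_Wset S r i)

lemma Good_mono (S : ι → Set X) (N : ι → ℕ) (U : ι → Set X) (ε : ℝ)
    (hN : ∀ a b, Relation.TransGen (limitsTo S) a b → N b < N a)
    {r r' : ι → ℝ} {i : ι}
    (hagree : ∀ j, N j ≤ N i → r j = r' j) (hg : Good S N U ε r i) :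
    Good S N U ε r' i := by
  have hii : r i = r' i := hagree i le_rfl
  have hW : Wset S r i = Wset S r' i :=
    Wset_congr S fun j hj => hagree j (le_of_lt (hN i j hj))
  have hC : Cset S r i = Cset S r' i := by unfold Cset; rw [hii, hW]
  obtain ⟨h1, h2, h3, h4, h5⟩ := hg
  refine ⟨hii ▸ h1, hii ▸ h2, hC ▸ h3, ?_, ?_⟩
  · intro j hj
    obtain ⟨t, ht, hsub⟩ := h4 j hj
    exact ⟨t, ht, by rw [← hii, ← hW]; exact hsub⟩
  · intro j hj hNj
    have hCj : Cset S r j = Cset S r' j := by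
      unfold Cset
      rw [hagree j (le_of_lt hNj),
        Wset_congr S fun k hk => hagree k (le_of_lt (lt_trans (hN j k hk) hNj))]
    rw [← hC, ← hCj]
    exact h5 j hj hNj

lemma exists_r [Fintype ι] (S : ι → Set X) (N : ι → ℕ) (U : ι → Set X) {ε : ℝ}
    (hne : ∀ i, (S i).Nonempty)
    (hcover : (⋃ i, S i) = Set.univ)
    (hacyclic : ∀ i, ¬ Relation.TransGen (limitsTo S) i i)
    (hNinj : Function.Injective N)
    (hN : ∀ a b, Relation.TransGen (limitsTo S) a b → N b < N a)
    (hUopen : ∀ i, IsOpen (U i)) (hSU : ∀ i, S i ⊆ U i) (hε : 0 < ε) :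
    ∀ m, ∃ r : ι → ℝ, ∀ i, N i < m → Good S N U ε r i := by
  classical
  intro m
  induction m with
  | zero => exact ⟨fun _ => 1, fun i h => absurd h (Nat.not_lt_zero _)⟩
  | succ m ih =>
    obtain ⟨r, hr⟩ := ih
    by_cases hex : ∃ i₀, N i₀ = m
    · obtain ⟨i₀, hi₀⟩ := hex
      have hιne : Nonempty ι := ⟨i₀⟩
      set W := Wset S r i₀ with hWdef
      have hWopen : IsOpen W := isOpen_Wset S r i₀
      have hbelow : ∀ ⦃j⦄, Relation.TransGen (limitsTo S) i₀ j → N j < m :=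
        fun j hj => hi₀ ▸ hN i₀ j hj
      have hSW : ∀ j, Relation.TransGen (limitsTo S) i₀ j → S j ⊆ W := by
        intro j hj
        refine subset_trans (self_subset_thickening (hr j (hbelow hj)).1 (S j)) ?_
        exact subset_iUnion₂ (s := fun j _ => thickening (r j) (S j)) j hj
      have hclosW : closure (S i₀) ⊆ W ∪ U i₀ := by
        intro x hx
        rcases closure_subset_below S hcover i₀ hx with h | h
        · exact Or.inr (hSU i₀ h)
        · obtain ⟨j, hj, hxj⟩ := mem_iUnion₂.1 h
          exact Or.inl (hSW j hj hxj)
      obtain ⟨ta, hta0, hta⟩ := L2 (hne i₀) (hne i₀) (hWopen.union (hUopen i₀))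
        (by rw [inter_self]; exact hclosW)
      rw [inter_self] at hta
      have htbex : ∀ j, ∃ t, 0 < t ∧ (incomparable S i₀ j →
          cthickening t (S i₀) ∩ cthickening t (S j) ⊆ W) := by
        intro j
        by_cases hj : incomparable S i₀ j
        · obtain ⟨t, ht, hsub⟩ := L2 (hne i₀) (hne j) hWopen
            (subset_trans (closure_inter_closure_subset S hcover hj) (by
              intro x hx
              obtain ⟨k, hk, hxk⟩ := mem_iUnion₂.1 hx
              exact hSW k hk hxk))
          exact ⟨t, ht, fun _ => hsub⟩
        · exact ⟨1, one_pos, fun h => absurd h hj⟩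
      choose tb htb0 htb using htbex
      have htcex : ∀ j, ∃ t, 0 < t ∧ (incomparable S i₀ j → N j < m →
          cthickening t (S i₀) ⊆ W ∪ (Cset S r j)ᶜ) := by
        intro j
        by_cases hj : incomparable S i₀ j ∧ N j < m
        · obtain ⟨t, ht, hsub⟩ := L2 (hne i₀) (hne i₀)
            (hWopen.union (isClosed_Cset S r j).isOpen_compl) (by
              rw [inter_self]
              intro x hx
              rcases closure_subset_below S hcover i₀ hx with h | h
              · refine Or.inr fun hxC => ?_
                obtain ⟨t', ht', hsub'⟩ := (hr j hj.2).2.2.2.1 i₀ (incomparable_symm hj.1)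
                exact hxC.2 (hsub' ⟨hxC.1, self_subset_cthickening _ h⟩)
              · obtain ⟨k, hk, hxk⟩ := mem_iUnion₂.1 h
                exact Or.inl (hSW k hk hxk))
          rw [inter_self] at hsub
          exact ⟨t, ht, fun _ _ => hsub⟩
        · exact ⟨1, one_pos, fun h1 h2 => absurd ⟨h1, h2⟩ hj⟩
      choose tc htc0 htc using htcex
      set v := min (min ta (ε / 2))
        (Finset.univ.inf' Finset.univ_nonempty fun j => min (tb j) (tc j)) with hvdef
      have hv0 : 0 < v :=
        lt_min (lt_min hta0 (by linarith))
          ((Finset.lt_inf'_iff _).2 fun j _ => lt_min (htb0 j) (htc0 j))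
      have hvta : v ≤ ta := le_trans (min_le_left _ _) (min_le_left _ _)
      have hvε : v < ε :=
        lt_of_le_of_lt (le_trans (min_le_left _ _) (min_le_right _ _)) (by linarith)
      have hvtb : ∀ j, v ≤ tb j := fun j =>
        le_trans (min_le_right _ _)
          (le_trans (Finset.inf'_le _ (Finset.mem_univ j)) (min_le_left _ _))
      have hvtc : ∀ j, v ≤ tc j := fun j =>
        le_trans (min_le_right _ _)
          (le_trans (Finset.inf'_le _ (Finset.mem_univ j)) (min_le_right _ _))
      set r' := Function.update r i₀ v with hr'def
      have hr'eq : ∀ j, N j < m → r' j = r j := by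
        intro j hj
        have : j ≠ i₀ := fun h => by rw [h, hi₀] at hj; omega
        simp [hr'def, Function.update_of_ne this]
      have hr'i₀ : r' i₀ = v := by simp [hr'def]
      have hW' : Wset S r' i₀ = W :=
        Wset_congr S fun j hj => hr'eq j (hbelow hj)
      refine ⟨r', fun i hi => ?_⟩
      rcases Nat.lt_succ_iff_lt_or_eq.1 hi with h | h
      · exact Good_mono S N U ε hN
          (fun j hj => (hr'eq j (lt_of_le_of_lt hj h)).symm) (hr i h)
      · have hii₀ : i = i₀ := hNinj (h.trans hi₀.symm)
        subst hii₀
        refine ⟨by rw [hr'i₀]; exact hv0, by rw [hr'i₀]; exact hvε, ?_, ?_, ?_⟩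
        · -- C ⊆ U
          intro x hx
          rw [Cset, hr'i₀, hW'] at hx
          rcases hta (cthickening_mono hvta _ hx.1) with hW | hU
          · exact absurd hW hx.2
          · exact hU
        · intro j hj
          refine ⟨tb j, htb0 j, ?_⟩
          rw [hr'i₀, hW']
          intro x hx
          exact htb j hj ⟨cthickening_mono (hvtb j) _ hx.1, hx.2⟩
        · intro j hj hNj
          rw [h] at hNj
          have hCj : Cset S r' j = Cset S r j := by
            unfold Cset
            rw [hr'eq j hNj, Wset_congr S fun k hk =>
              hr'eq k (lt_trans (hN j k hk) hNj)]
          rw [hCj]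
          apply eq_empty_iff_forall_notMem.2
          rintro x ⟨hx1, hx2⟩
          rw [Cset, hr'i₀, hW'] at hx1
          rcases htc j hj hNj (cthickening_mono (hvtc j) _ hx1.1) with hW | hC
          · exact hx1.2 hW
          · exact hC hx2
    · refine ⟨r, fun i hi => hr i ?_⟩
      rcases Nat.lt_succ_iff_lt_or_eq.1 hi with h | h
      · exact h
      · exact absurd ⟨i, h⟩ hex

end Main

/-- Sublemma: partition of a closed subset subordinate to a
generalized stratification with the NDR property. -/
theorem stmt1 {X : Type*} [MetricSpace X] [CompactSpace X]
    {ι : Type*} [Finite ι] (S : ι → Set X)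
    -- `S` is a generalized stratification of `X`:
    (hne : ∀ i, (S i).Nonempty)
    (hdisj : ∀ i j, i ≠ j → Disjoint (S i) (S j))
    (hcover : (⋃ i, S i) = Set.univ)
    (hacyclic : ∀ i, ¬ Relation.TransGen (limitsTo S) i i)
    -- with the NDR property:
    (hNDR : ∀ i, ∃ U : Set X, IsOpen U ∧ S i ⊆ U ∧
      ∃ H : U × unitInterval → X, Continuous H ∧
        (∀ u : U, H (u, 0) = u) ∧
        (∀ u : U, H (u, 1) ∈ S i) ∧
        (∀ u : U, (u : X) ∈ S i → ∀ t : unitInterval, H (u, t) = u))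
    (A : Set X) (hA : IsClosed A) (ε : ℝ) (hε : 0 < ε) :
    ∃ (P : ι → Set X) (δ : ℝ), 0 < δ ∧
      (∀ i j, i ≠ j → Disjoint (P i) (P j)) ∧
      (⋃ i, P i) = A ∧
      -- (1) each `P i` lies in the `ε`-neighborhood of `S i`:
      (∀ i, ∀ x ∈ P i, ∃ y ∈ S i, dist x y < ε) ∧
      -- (2) incomparable strata and their `P`-sets stay `δ`-far apart:
      (∀ i j, incomparable S i j →
        (∀ x ∈ P i, ∀ y ∈ P j, δ < dist x y) ∧
        (∀ x ∈ P i, ∀ y ∈ S j, δ < dist x y) ∧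
        (∀ x ∈ S i, ∀ y ∈ P j, δ < dist x y)) ∧
      -- (3) the `δ`-neighborhood of `P i` in `A` lies in an NDR neighborhood of `S i`:
      (∀ i, ∃ U : Set X, IsOpen U ∧ S i ⊆ U ∧
        (∃ H : U × unitInterval → X, Continuous H ∧
          (∀ u : U, H (u, 0) = u) ∧
          (∀ u : U, H (u, 1) ∈ S i) ∧
          (∀ u : U, (u : X) ∈ S i → ∀ t : unitInterval, H (u, t) = u)) ∧
        (∀ a ∈ A, (∃ p ∈ P i, dist a p < δ) → a ∈ U)) := by
  classical
  choose U hUopen hSU H hHcont hH0 hH1 hHfix using hNDR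
  rcases isEmpty_or_nonempty ι with hι | hι
  · refine ⟨fun _ => ∅, 1, one_pos, fun i => isEmptyElim i, ?_, fun i => isEmptyElim i,
      fun i => isEmptyElim i, fun i => isEmptyElim i⟩
    have hAe : A = ∅ := by
      apply eq_empty_of_subset_empty
      have : (Set.univ : Set X) = ∅ := by rw [← hcover]; exact iUnion_of_empty _
      rw [← this]
      exact subset_univ A
    rw [hAe]
    exact iUnion_of_empty _
  letI : Fintype ι := Fintype.ofFinite ι
  obtain ⟨N, hNinj, hN⟩ := exists_priority S hacyclic
  obtain ⟨r, hrG⟩ := exists_r S N U hne hcover hacyclic hNinj hN hUopen hSU hε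
    ((Finset.univ.sup N) + 1)
  have hGood : ∀ i, Good S N U ε r i := fun i =>
    hrG i (Nat.lt_succ_of_le (Finset.le_sup (Finset.mem_univ i)))
  set P : ι → Set X := fun i =>
    {x | x ∈ A ∧ x ∈ cthickening (r i) (S i) ∧
      ∀ j, N j < N i → x ∉ cthickening (r j) (S j)} with hPdef
  have hPmem : ∀ {i x}, x ∈ P i ↔ (x ∈ A ∧ x ∈ cthickening (r i) (S i) ∧
      ∀ j, N j < N i → x ∉ cthickening (r j) (S j)) := by
    intro i x
    rw [hPdef]
    exact Iff.rfl
  have hPA : ∀ i, P i ⊆ A := fun i x hx => (hPmem.1 hx).1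
  have hPC : ∀ i, P i ⊆ Cset S r i := by
    intro i x hx
    obtain ⟨_, hx1, hx2⟩ := hPmem.1 hx
    refine ⟨hx1, fun hxW => ?_⟩
    obtain ⟨j, hj, hxj⟩ := mem_iUnion₂.1 hxW
    exact hx2 j (hN i j hj) (thickening_subset_cthickening _ _ hxj)
  have ht1ex : ∀ i, ∃ t, 0 < t ∧ thickening t (Cset S r i) ⊆ U i := by
    intro i
    obtain ⟨t, ht0, hsub⟩ := ((isClosed_Cset S r i).isCompact).exists_thickening_subset_open
      (hUopen i) (hGood i).2.2.1
    exact ⟨t, ht0, hsub⟩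
  choose t1 ht10 ht1 using ht1ex
  have ht2ex : ∀ i j, ∃ t, 0 < t ∧ (incomparable S i j →
      ∀ x ∈ Cset S r i, ∀ y ∈ S j, t ≤ dist x y) := by
    intro i j
    by_cases hij : incomparable S i j
    · obtain ⟨t, ht0, hsub⟩ := (hGood i).2.2.2.1 j hij
      refine ⟨t, ht0, fun _ x hx y hy => ?_⟩
      by_contra hlt
      push_neg at hlt
      exact hx.2 (hsub ⟨hx.1, mem_cthickening_of_dist_le x y t (S j) hy hlt.le⟩)
    · exact ⟨1, one_pos, fun h => absurd h hij⟩
  choose t2 ht20 ht2 using ht2ex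
  have ht3ex : ∀ i j, ∃ t, 0 < t ∧ (incomparable S i j → N j < N i →
      ∀ x ∈ Cset S r i, ∀ y ∈ Cset S r j, t ≤ dist x y) := by
    intro i j
    by_cases hij : incomparable S i j ∧ N j < N i
    · have hdisj0 : Cset S r i ∩ Cset S r j = ∅ := (hGood i).2.2.2.2 j hij.1 hij.2
      obtain ⟨t, ht0, hsub⟩ := ((isClosed_Cset S r j).isCompact).exists_thickening_subset_open
        (isClosed_Cset S r i).isOpen_compl (fun y hy hyC =>
          eq_empty_iff_forall_notMem.1 hdisj0 y ⟨hyC, hy⟩)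
      refine ⟨t, ht0, fun _ _ x hx y hy => ?_⟩
      by_contra hlt
      push_neg at hlt
      exact hsub (mem_thickening_iff.2 ⟨y, hy, hlt⟩) hx
    · exact ⟨1, one_pos, fun h1 h2 => absurd ⟨h1, h2⟩ hij⟩
  choose t3 ht30 ht3 using ht3ex
  set m0 := Finset.univ.inf' Finset.univ_nonempty (fun i => min (t1 i)
    (Finset.univ.inf' Finset.univ_nonempty fun j => min (t2 i j) (t3 i j))) with hm0def
  have hm00 : 0 < m0 := (Finset.lt_inf'_iff _).2 fun i _ =>
    lt_min (ht10 i) ((Finset.lt_inf'_iff _).2 fun j _ => lt_min (ht20 i j) (ht30 i j))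
  have hm0t1 : ∀ i, m0 ≤ t1 i := fun i =>
    le_trans (Finset.inf'_le _ (Finset.mem_univ i)) (min_le_left _ _)
  have hm0t2 : ∀ i j, m0 ≤ t2 i j := fun i j =>
    le_trans (Finset.inf'_le _ (Finset.mem_univ i)) (le_trans (min_le_right _ _)
      (le_trans (Finset.inf'_le _ (Finset.mem_univ j)) (min_le_left _ _)))
  have hm0t3 : ∀ i j, m0 ≤ t3 i j := fun i j =>
    le_trans (Finset.inf'_le _ (Finset.mem_univ i)) (le_trans (min_le_right _ _)
      (le_trans (Finset.inf'_le _ (Finset.mem_univ j)) (min_le_right _ _)))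
  refine ⟨P, m0 / 2, by linarith, ?_, ?_, ?_, ?_, ?_⟩
  · -- disjointness
    intro i j hij
    rw [Set.disjoint_left]
    intro x hxi hxj
    rcases (show N i ≠ N j from fun h => hij (hNinj h)).lt_or_gt with h | h
    · exact (hPmem.1 hxj).2.2 i h (hPmem.1 hxi).2.1
    · exact (hPmem.1 hxi).2.2 j h (hPmem.1 hxj).2.1
  · -- union
    apply subset_antisymm
    · exact iUnion_subset hPA
    · intro a ha
      have haS : ∃ i, a ∈ cthickening (r i) (S i) := by
        have : a ∈ ⋃ i, S i := by rw [hcover]; trivial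
        obtain ⟨i, hi⟩ := mem_iUnion.1 this
        exact ⟨i, self_subset_cthickening _ hi⟩
      set M := Finset.univ.filter (fun i => a ∈ cthickening (r i) (S i)) with hMdef
      have hMne : M.Nonempty := by
        obtain ⟨i, hi⟩ := haS
        exact ⟨i, Finset.mem_filter.2 ⟨Finset.mem_univ i, hi⟩⟩
      obtain ⟨i, hiM, hmin⟩ := M.exists_min_image N hMne
      refine mem_iUnion.2 ⟨i, hPmem.2 ⟨ha, ?_, ?_⟩⟩
      · exact (Finset.mem_filter.1 hiM).2
      · intro j hj haj
        have hjM : j ∈ M := Finset.mem_filter.2 ⟨Finset.mem_univ j, haj⟩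
        exact absurd (hmin j hjM) (by omega)
  · -- (1)
    intro i x hx
    have h1 : infDist x (S i) ≤ r i :=
      (mem_cthick_iff (hne i) (hGood i).1.le).1 (hPmem.1 hx).2.1
    exact (infDist_lt_iff (hne i)).1 (lt_of_le_of_lt h1 (hGood i).2.1)
  · -- (2)
    intro i j hij
    have hne' : i ≠ j := fun h => hij.1 (h ▸ Relation.ReflTransGen.refl)
    refine ⟨?_, ?_, ?_⟩
    · intro x hx y hy
      rcases (show N i ≠ N j from fun h => hne' (hNinj h)).lt_or_gt with h | h
      · have hd := ht3 j i (incomparable_symm hij) h y (hPC j hy) x (hPC i hx)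
        rw [dist_comm] at hd
        linarith [hm0t3 j i]
      · have hd := ht3 i j hij h x (hPC i hx) y (hPC j hy)
        linarith [hm0t3 i j]
    · intro x hx y hy
      have hd := ht2 i j hij x (hPC i hx) y hy
      linarith [hm0t2 i j]
    · intro x hx y hy
      have hd := ht2 j i (incomparable_symm hij) y (hPC j hy) x hx
      rw [dist_comm] at hd
      linarith [hm0t2 j i]
  · -- (3)
    intro i
    refine ⟨U i, hUopen i, hSU i, ⟨H i, hHcont i, hH0 i, hH1 i, hHfix i⟩, ?_⟩
    rintro a ha ⟨p, hp, hd⟩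
    apply ht1 i
    exact mem_thickening_iff.2 ⟨p, hPC i hp, lt_of_lt_of_le hd (by linarith [hm0t1 i])⟩
end

section
/- Let X be a finite CW complex (finitely many cells). Then the partition of X by its open cells has the NDR property: for every open cell e of X there exist an open set U ⊆ X with e ⊆ U and a continuous map H : U × [0,1] → X such that H(u, 0) = u for all u ∈ U, H(u, 1) ∈ e for all u ∈ U, and H(s, t) = s for all s ∈ e and t ∈ [0,1]. -/
open Metric

/-- A CW-complex structure (in the classical sense) on a topological space `X`:
a family of cells given by characteristic maps from closed unit balls, each a
homeomorphism of the open ball onto its image, such that the open cells are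
pairwise disjoint and partition `X`, and the image of the boundary sphere of every
`n`-cell is contained in the union of the open cells of dimension `< n`
(the `(n-1)`-skeleton). -/
structure ClassicalCWComplex (X : Type*) [TopologicalSpace X] where
  /-- the index type of the `n`-cells -/
  cell : ℕ → Type
  /-- the characteristic map of each `n`-cell. -/
  map : (n : ℕ) → cell n → EuclideanSpace ℝ (Fin n) → X
  /-- characteristic maps are continuous on the closed unit ball -/
  continuousOn : ∀ n i, ContinuousOn (map n i) (closedBall 0 1)
  /-- each characteristic map restricts to a homeomorphism of the open unit ball
  onto the open cell: it has a continuous partial inverse there -/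
  symm : ∀ n i, ∃ g : X → EuclideanSpace ℝ (Fin n),
    ContinuousOn g (map n i '' ball 0 1) ∧
    ∀ x ∈ ball (0 : EuclideanSpace ℝ (Fin n)) 1, g (map n i x) = x
  /-- the open cells are pairwise disjoint -/
  pairwiseDisjoint' : ∀ (n : ℕ) (i : cell n) (m : ℕ) (j : cell m),
    (⟨n, i⟩ : Σ k, cell k) ≠ ⟨m, j⟩ →
      Disjoint (map n i '' ball 0 1) (map m j '' ball 0 1)
  /-- the open cells cover `X` -/
  union' : ⋃ (n : ℕ) (i : cell n), map n i '' ball 0 1 = Set.univ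
  /-- the image of the boundary sphere of an `n`-cell lies in the union of the
  open cells of dimension `< n` -/
  mapsTo' : ∀ n i, map n i '' sphere 0 1 ⊆
    ⋃ (m : ℕ) (_ : m < n) (j : cell m), map m j '' ball 0 1

namespace ClassicalCWComplex

variable {X : Type*} [TopologicalSpace X] (K : ClassicalCWComplex X)

/-- The open cell of dimension `n` and index `i`. -/
def openCell (n : ℕ) (i : K.cell n) : Set X := K.map n i '' ball 0 1

/-- The `m`-skeleton: the union of the open cells of dimension at most `m`. -/
def skeleton (m : ℕ) : Set X :=
  ⋃ (n : ℕ) (_ : n ≤ m) (i : K.cell n), K.openCell n i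

end ClassicalCWComplex

/-!
Induction on skeleta. Suppose `F` deforms a relatively open neighbourhood `U` of the cell `e`
in the `M`-skeleton into `e`, keeping `e` fixed. For an `(M+1)`-cell, the points `y` of the
open ball with `‖y‖ > 1/2` whose radial projection `y / ‖y‖` lands in `U` form an open collar
of the boundary sphere; adding the images of all these collars to `U` gives a relatively open
neighbourhood in the `(M+1)`-skeleton. The new deformation pushes a collar point radially
onto the sphere during `[0, 1/2]` and then follows `F` at double speed, while points of `U`
wait until time `1/2`. The induction starts with `e` itself, which is open in its own skeleton,
and ends at the top skeleton, which is all of `X`. Since the complex is finite, its topology is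
coherent with the closed cells (finitely many compact images of balls), so openness and
continuity can be checked on each closed ball separately.
-/

open Set Function Topology unitInterval

section CompactCover

variable {X Y ι : Type*} [TopologicalSpace X] [TopologicalSpace Y] [T2Space X] [Finite ι]
  {P : ι → Type*} [∀ i, TopologicalSpace (P i)] {φ : ∀ i, P i → X} {C : ∀ i, Set (P i)}

theorem exists_isOpen_inter_eq_of_isCompact_cover (hC : ∀ i, IsCompact (C i))
    (hφ : ∀ i, ContinuousOn (φ i) (C i)) {s t : Set X} (hs : s ⊆ ⋃ i, φ i '' C i)
    (ht : ∀ i, ∃ G, IsOpen G ∧ φ i ⁻¹' t ∩ (φ i ⁻¹' s ∩ C i) = G ∩ (φ i ⁻¹' s ∩ C i)) :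
    ∃ O, IsOpen O ∧ t ∩ s = O ∩ s := by
  choose G hG hGt using ht
  refine ⟨(⋃ i, φ i '' (C i \ G i))ᶜ, isOpen_compl_iff.2 <| isClosed_iUnion_of_finite fun i =>
    (((hC i).diff (hG i)).image_of_continuousOn ((hφ i).mono sdiff_subset)).isClosed, ?_⟩
  ext x
  simp only [mem_inter_iff, mem_compl_iff, mem_iUnion, mem_image, not_exists, not_and]
  refine ⟨fun ⟨hxt, hxs⟩ => ⟨fun i p hp hpx => hp.2 ?_, hxs⟩, fun ⟨hxO, hxs⟩ => ⟨?_, hxs⟩⟩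
  · subst hpx
    exact ((hGt i ▸ ⟨hxt, hxs, hp.1⟩ : p ∈ G i ∩ (φ i ⁻¹' s ∩ C i))).1
  · obtain ⟨i, p, hpC, rfl⟩ := mem_iUnion.1 (hs hxs)
    have hpG : p ∈ G i := by_contra fun hpG => hxO i p ⟨hpC, hpG⟩ rfl
    exact ((hGt i).symm ▸ ⟨hpG, hxs, hpC⟩ : p ∈ φ i ⁻¹' t ∩ (φ i ⁻¹' s ∩ C i)).1

theorem continuousOn_of_isCompact_cover (hC : ∀ i, IsCompact (C i))
    (hφ : ∀ i, ContinuousOn (φ i) (C i)) {g : X → Y} {s : Set X} (hs : s ⊆ ⋃ i, φ i '' C i)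
    (hg : ∀ i, ContinuousOn (g ∘ φ i) (φ i ⁻¹' s ∩ C i)) : ContinuousOn g s :=
  continuousOn_iff'.2 fun t ht =>
    exists_isOpen_inter_eq_of_isCompact_cover hC hφ hs fun i => continuousOn_iff'.1 (hg i) t ht

end CompactCover

theorem ContinuousOn.if_le {α β γ : Type*} [TopologicalSpace α] [LinearOrder β]
    [TopologicalSpace β] [OrderClosedTopology β] [TopologicalSpace γ] {s : Set α}
    {f g : α → β} {f' g' : α → γ} [∀ x, Decidable (f x ≤ g x)]
    (hf' : ContinuousOn f' (s ∩ {x | f x ≤ g x})) (hg' : ContinuousOn g' (s ∩ {x | g x ≤ f x}))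
    (hf : Continuous f) (hg : Continuous g) (hfg : ∀ x ∈ s, f x = g x → f' x = g' x) :
    ContinuousOn (fun x => if f x ≤ g x then f' x else g' x) s := by
  refine ContinuousOn.if (fun x hx => hfg x hx.1 (frontier_le_subset_eq hf hg hx.2))
    (by rwa [closure_le_eq hf hg]) (hg'.mono (inter_subset_inter_right _ ?_))
  simpa only [not_le] using closure_lt_subset_le hg hf

namespace unitInterval

noncomputable def secondHalf (t : I) : I := projIcc 0 1 zero_le_one (2 * t - 1)

theorem continuous_secondHalf : Continuous secondHalf :=
  continuous_projIcc.comp (by fun_prop)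

theorem secondHalf_of_le_half {t : I} (ht : (t : ℝ) ≤ 1 / 2) : secondHalf t = 0 :=
  projIcc_of_le_left _ (by linarith)

theorem secondHalf_one : secondHalf 1 = 1 :=
  projIcc_of_right_le _ (by norm_num)

end unitInterval

structure IsDeformationInto {X : Type*} [TopologicalSpace X] (F : X → I → X) (U A : Set X) :
    Prop where
  subset : A ⊆ U
  continuousOn : ContinuousOn (uncurry F) (U ×ˢ univ)
  map_zero : ∀ x ∈ U, F x 0 = x
  map_one_mem : ∀ x ∈ U, F x 1 ∈ A
  map_of_mem : ∀ x ∈ A, ∀ t, F x t = x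

theorem isDeformationInto_self {X : Type*} [TopologicalSpace X] (A : Set X) :
    IsDeformationInto (fun x _ => x) A A :=
  ⟨subset_rfl, continuous_fst.continuousOn, fun _ _ => rfl, fun _ hx => hx, fun _ _ _ => rfl⟩

namespace ClassicalCWComplex

variable {X : Type*} [TopologicalSpace X] (K : ClassicalCWComplex X)

section Cells

def closedCell (n : ℕ) (i : K.cell n) : Set X := K.map n i '' closedBall 0 1

/-- An inverse of the characteristic map on the open cell; its values elsewhere are junk. -/
noncomputable def mapInv (n : ℕ) (i : K.cell n) : X → EuclideanSpace ℝ (Fin n) :=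
  (K.symm n i).choose

variable {K} {n m : ℕ} {i : K.cell n} {x : X}

theorem mapInv_map {y : EuclideanSpace ℝ (Fin n)} (hy : y ∈ ball 0 1) :
    K.mapInv n i (K.map n i y) = y :=
  (K.symm n i).choose_spec.2 y hy

theorem openCell_subset_closedCell : K.openCell n i ⊆ K.closedCell n i :=
  image_mono ball_subset_closedBall

theorem sigma_eq_of_mem_openCell {j : K.cell m} (hi : x ∈ K.openCell n i)
    (hj : x ∈ K.openCell m j) : (⟨n, i⟩ : Σ k, K.cell k) = ⟨m, j⟩ :=
  by_contra fun h => disjoint_left.1 (K.pairwiseDisjoint' n i m j h) hi hj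

theorem eq_of_map_eq_map {j j' : K.cell m} {y y' : EuclideanSpace ℝ (Fin m)}
    (hy : y ∈ ball 0 1) (hy' : y' ∈ ball 0 1) (h : K.map m j y = K.map m j' y') : j = j' ∧ y = y' := by
  obtain rfl : j = j' :=
    sigma_mk_injective (sigma_eq_of_mem_openCell ⟨y, hy, rfl⟩ ⟨y', hy', h.symm⟩)
  exact ⟨rfl, by rw [← mapInv_map (i := j) hy, h, mapInv_map hy']⟩

theorem mem_skeleton_iff : x ∈ K.skeleton m ↔ ∃ k ≤ m, ∃ j : K.cell k, x ∈ K.openCell k j := by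
  simp [skeleton]

theorem openCell_subset_skeleton (h : n ≤ m) : K.openCell n i ⊆ K.skeleton m :=
  fun _ hx => mem_skeleton_iff.2 ⟨n, h, i, hx⟩

theorem skeleton_mono (h : n ≤ m) : K.skeleton n ⊆ K.skeleton m := fun _ hx => by
  obtain ⟨k, hk, j, hj⟩ := mem_skeleton_iff.1 hx
  exact openCell_subset_skeleton (hk.trans h) hj

theorem notMem_skeleton_of_mem_openCell (h : m < n) (hx : x ∈ K.openCell n i) :
    x ∉ K.skeleton m := fun hx' => by
  obtain ⟨k, hk, j, hj⟩ := mem_skeleton_iff.1 hx'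
  have : n = k := congrArg Sigma.fst (sigma_eq_of_mem_openCell hx hj)
  omega

theorem exists_lt_mem_openCell_of_mem_sphere {y : EuclideanSpace ℝ (Fin n)}
    (hy : y ∈ sphere 0 1) : ∃ k < n, ∃ j : K.cell k, K.map n i y ∈ K.openCell k j := by
  simpa only [openCell, mem_iUnion, exists_prop] using K.mapsTo' n i (mem_image_of_mem _ hy)

theorem map_mem_skeleton_of_mem_sphere (h : n ≤ m + 1) {y : EuclideanSpace ℝ (Fin n)}
    (hy : y ∈ sphere 0 1) : K.map n i y ∈ K.skeleton m := by
  obtain ⟨k, hk, j, hj⟩ := exists_lt_mem_openCell_of_mem_sphere (i := i) hy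
  exact openCell_subset_skeleton (by omega) hj

theorem closedCell_subset_skeleton (h : n ≤ m) : K.closedCell n i ⊆ K.skeleton m := by
  rintro _ ⟨y, hy, rfl⟩
  rw [← ball_union_sphere] at hy
  rcases hy with hy | hy
  · exact openCell_subset_skeleton h ⟨y, hy, rfl⟩
  · exact map_mem_skeleton_of_mem_sphere (by omega) hy

theorem sigma_eq_of_map_mem_openCell {k : ℕ} {j : K.cell k} (hk : k ≤ n)
    {y : EuclideanSpace ℝ (Fin k)} (hy : y ∈ closedBall 0 1) (h : K.map k j y ∈ K.openCell n i) :
    (⟨k, j⟩ : Σ d, K.cell d) = ⟨n, i⟩ ∧ y ∈ ball 0 1 := by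
  rw [← ball_union_sphere] at hy
  rcases hy with hy | hy
  · exact ⟨sigma_eq_of_mem_openCell ⟨y, hy, rfl⟩ h, hy⟩
  · obtain ⟨l, hl, j', hj'⟩ := exists_lt_mem_openCell_of_mem_sphere (i := j) hy
    have : l = n := congrArg Sigma.fst (sigma_eq_of_mem_openCell hj' h)
    omega

theorem exists_skeleton_eq_univ (hfin : Finite (Σ n, K.cell n)) : ∃ N, K.skeleton N = univ := by
  obtain ⟨N, hN⟩ := (finite_range fun p : Σ k, K.cell k => p.1).bddAbove
  refine ⟨N, eq_univ_of_univ_subset fun x _ => ?_⟩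
  obtain ⟨k, j, hx⟩ : ∃ k, ∃ j : K.cell k, x ∈ K.openCell k j := by
    simpa only [openCell, ← K.union', mem_iUnion] using mem_univ x
  exact openCell_subset_skeleton (hN ⟨⟨k, j⟩, rfl⟩) hx

theorem skeleton_subset_iUnion_closedCell :
    K.skeleton m ⊆ ⋃ p : {p : Σ k, K.cell k // p.1 ≤ m}, K.closedCell p.1.1 p.1.2 :=
  fun x hx => by
    obtain ⟨k, hk, j, hj⟩ := mem_skeleton_iff.1 hx
    exact mem_iUnion.2 ⟨⟨⟨k, j⟩, hk⟩, openCell_subset_closedCell hj⟩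

variable [T2Space X]

theorem exists_isOpen_eq_inter_skeleton (hfin : Finite (Σ n, K.cell n)) {U : Set X}
    (hU : U ⊆ K.skeleton m)
    (h : ∀ k ≤ m, ∀ j : K.cell k, ∃ G, IsOpen G ∧
      K.map k j ⁻¹' U ∩ closedBall 0 1 = G ∩ closedBall 0 1) :
    ∃ O, IsOpen O ∧ U = O ∩ K.skeleton m := by
  obtain ⟨O, hO, hUO⟩ := exists_isOpen_inter_eq_of_isCompact_cover
    (fun _ => isCompact_closedBall 0 1) (fun p => K.continuousOn p.1.1 p.1.2)
    (t := U) skeleton_subset_iUnion_closedCell fun p => by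
      rw [inter_eq_right.2 (image_subset_iff.1 (closedCell_subset_skeleton p.2))]
      exact h p.1.1 p.2 p.1.2
  exact ⟨O, hO, (inter_eq_left.2 hU).symm.trans hUO⟩

theorem continuousOn_of_skeleton (hfin : Finite (Σ n, K.cell n)) {Y : Type*}
    [TopologicalSpace Y] {U : Set X} (hU : U ⊆ K.skeleton m) {F : X → I → Y}
    (h : ∀ k ≤ m, ∀ j : K.cell k, ContinuousOn (fun q => F (K.map k j q.1) q.2)
      ((K.map k j ⁻¹' U ∩ closedBall 0 1) ×ˢ univ)) :
    ContinuousOn (uncurry F) (U ×ˢ univ) := by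
  refine continuousOn_of_isCompact_cover (ι := {p : Σ k, K.cell k // p.1 ≤ m})
    (φ := fun p => Prod.map (K.map p.1.1 p.1.2) id) (C := fun _ => closedBall 0 1 ×ˢ univ)
    (fun _ => (isCompact_closedBall 0 1).prod isCompact_univ)
    (fun p => (K.continuousOn p.1.1 p.1.2).prodMap continuousOn_id) ?_ fun p => ?_
  · rintro ⟨x, t⟩ ⟨hx, -⟩
    obtain ⟨p, y, hy, rfl⟩ := mem_iUnion.1 (skeleton_subset_iUnion_closedCell (hU hx))
    exact mem_iUnion.2 ⟨p, (y, t), ⟨hy, trivial⟩, rfl⟩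
  · rw [preimage_prod_map_prod, preimage_id, prod_inter_prod, univ_inter]
    exact h p.1.1 p.2 p.1.2

theorem exists_isOpen_openCell_eq_inter_skeleton (hfin : Finite (Σ n, K.cell n)) {n : ℕ}
    (i : K.cell n) : ∃ O, IsOpen O ∧ K.openCell n i = O ∩ K.skeleton n := by
  refine exists_isOpen_eq_inter_skeleton hfin (openCell_subset_skeleton le_rfl) fun k hk j =>
    ⟨ball 0 1 ∩ {_y | (⟨k, j⟩ : Σ d, K.cell d) = ⟨n, i⟩}, isOpen_ball.inter isOpen_const, ?_⟩
  ext y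
  refine ⟨fun ⟨h, hy⟩ => ?_, fun ⟨⟨hb, he⟩, hy⟩ => ⟨?_, hy⟩⟩
  · obtain ⟨he, hb⟩ := sigma_eq_of_map_mem_openCell hk hy h
    exact ⟨⟨hb, he⟩, hy⟩
  · cases he
    exact ⟨y, hb, rfl⟩

end Cells

section Collar

def collar {m : ℕ} (U : Set X) (j : K.cell m) : Set (EuclideanSpace ℝ (Fin m)) :=
  {y | 1 / 2 < ‖y‖ ∧ K.map m j (‖y‖⁻¹ • y) ∈ U}

def extendNbhd (m : ℕ) (U : Set X) : Set X :=
  U ∪ ⋃ j : K.cell m, K.map m j '' (K.collar U j ∩ ball 0 1)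

noncomputable def collarHomotopy (F : X → I → X) {m : ℕ} (j : K.cell m)
    (y : EuclideanSpace ℝ (Fin m)) (t : I) : X :=
  if (t : ℝ) ≤ 1 / 2 then K.map m j (AffineMap.lineMap y (‖y‖⁻¹ • y) (2 * t : ℝ))
  else F (K.map m j (‖y‖⁻¹ • y)) (secondHalf t)

open Classical in
noncomputable def extendHomotopy (F : X → I → X) (m : ℕ) (U : Set X) (x : X) (t : I) : X :=
  if h : ∃ j : K.cell m, x ∈ K.map m j '' (K.collar U j ∩ ball 0 1) then
    K.collarHomotopy F h.choose (K.mapInv m h.choose x) t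
  else F x (secondHalf t)

variable {K} {m M : ℕ} {U : Set X} {F : X → I → X} {x : X} {y : EuclideanSpace ℝ (Fin m)}

theorem ne_zero_of_mem_collar {j : K.cell m} (hy : y ∈ K.collar U j) : y ≠ 0 :=
  norm_pos_iff.1 (one_half_pos.trans hy.1)

theorem continuousOn_map_inv_norm_smul (j : K.cell m) :
    ContinuousOn (fun y : EuclideanSpace ℝ (Fin m) => K.map m j (‖y‖⁻¹ • y)) {0}ᶜ :=
  (K.continuousOn m j).comp ((continuousOn_id.norm.inv₀ fun _ hy => norm_ne_zero_iff.2 hy).smul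
    continuousOn_id) fun y _ => inv_norm_smul_mem_unitClosedBall y

theorem map_inv_norm_smul_mem_skeleton (j : K.cell (M + 1)) {y : EuclideanSpace ℝ (Fin (M + 1))}
    (hy : y ≠ 0) : K.map (M + 1) j (‖y‖⁻¹ • y) ∈ K.skeleton M :=
  map_mem_skeleton_of_mem_sphere le_rfl (mem_sphere_zero_iff_norm.2 (norm_smul_inv_norm hy))

theorem isOpen_collar {O : Set X} (hO : IsOpen O) (j : K.cell (M + 1)) :
    IsOpen (K.collar (O ∩ K.skeleton M) j) := by
  have hcollar : K.collar (O ∩ K.skeleton M) j =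
      {y | 1 / 2 < ‖y‖} ∩ (fun y => K.map (M + 1) j (‖y‖⁻¹ • y)) ⁻¹' O := by
    ext y
    refine ⟨fun hy => ⟨hy.1, hy.2.1⟩, fun hy => ⟨hy.1, hy.2, ?_⟩⟩
    exact map_inv_norm_smul_mem_skeleton j (norm_pos_iff.1 (one_half_pos.trans hy.1))
  rw [hcollar]
  exact ((continuousOn_map_inv_norm_smul j).mono fun y hy =>
    norm_pos_iff.1 (one_half_pos.trans hy)).isOpen_inter_preimage
    (isOpen_lt continuous_const continuous_norm) hO

theorem mem_extendNbhd_iff_of_mem_skeleton (hx : x ∈ K.skeleton M) :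
    x ∈ K.extendNbhd (M + 1) U ↔ x ∈ U := by
  refine ⟨fun h => h.resolve_right fun hx' => ?_, Or.inl⟩
  obtain ⟨j, y, hy, rfl⟩ := mem_iUnion.1 hx'
  exact notMem_skeleton_of_mem_openCell (lt_add_one M) ⟨y, hy.2, rfl⟩ hx

theorem extendNbhd_subset_skeleton (hU : U ⊆ K.skeleton M) :
    K.extendNbhd (M + 1) U ⊆ K.skeleton (M + 1) :=
  union_subset (hU.trans (skeleton_mono M.le_succ)) <| iUnion_subset fun _ =>
    (image_mono inter_subset_right).trans (openCell_subset_skeleton le_rfl)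

theorem map_mem_extendNbhd_iff (hU : U ⊆ K.skeleton M) {j : K.cell (M + 1)}
    {y : EuclideanSpace ℝ (Fin (M + 1))} (hy : y ∈ closedBall 0 1) :
    K.map (M + 1) j y ∈ K.extendNbhd (M + 1) U ↔ y ∈ K.collar U j := by
  rw [← ball_union_sphere] at hy
  rcases hy with hy | hy
  · refine ⟨fun h => ?_, fun h => Or.inr (mem_iUnion.2 ⟨j, y, ⟨h, hy⟩, rfl⟩)⟩
    rcases h with h | h
    · exact (notMem_skeleton_of_mem_openCell (lt_add_one M) ⟨y, hy, rfl⟩ (hU h)).elim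
    · obtain ⟨j', y', hy', he⟩ := mem_iUnion.1 h
      obtain ⟨rfl, rfl⟩ := eq_of_map_eq_map hy'.2 hy he
      exact hy'.1
  · rw [mem_extendNbhd_iff_of_mem_skeleton (map_mem_skeleton_of_mem_sphere le_rfl hy)]
    rw [mem_sphere_zero_iff_norm] at hy
    norm_num [collar, hy]

theorem preimage_extendNbhd_of_le {k : ℕ} (hk : k ≤ M) (j : K.cell k) :
    K.map k j ⁻¹' K.extendNbhd (M + 1) U ∩ closedBall 0 1 =
      K.map k j ⁻¹' U ∩ closedBall 0 1 := by
  ext y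
  exact and_congr_left fun hy =>
    mem_extendNbhd_iff_of_mem_skeleton (closedCell_subset_skeleton hk ⟨y, hy, rfl⟩)

theorem preimage_extendNbhd (hU : U ⊆ K.skeleton M) (j : K.cell (M + 1)) :
    K.map (M + 1) j ⁻¹' K.extendNbhd (M + 1) U ∩ closedBall 0 1 =
      K.collar U j ∩ closedBall 0 1 := by
  ext y
  exact and_congr_left (map_mem_extendNbhd_iff hU)

theorem extendHomotopy_of_mem (hU : U ⊆ K.skeleton M) (hx : x ∈ U) (t : I) :
    K.extendHomotopy F (M + 1) U x t = F x (secondHalf t) := by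
  refine dif_neg ?_
  rintro ⟨j, y, hy, rfl⟩
  exact notMem_skeleton_of_mem_openCell (lt_add_one M) ⟨y, hy.2, rfl⟩ (hU hx)

theorem extendHomotopy_map {j : K.cell m} {y : EuclideanSpace ℝ (Fin m)}
    (hy : y ∈ K.collar U j ∩ ball 0 1) (t : I) :
    K.extendHomotopy F m U (K.map m j y) t = K.collarHomotopy F j y t := by
  have h : ∃ j', K.map m j y ∈ K.map m j' '' (K.collar U j' ∩ ball 0 1) := ⟨j, y, hy, rfl⟩
  obtain ⟨y', hy', he⟩ := h.choose_spec
  rw [extendHomotopy, dif_pos h, (eq_of_map_eq_map hy'.2 hy.2 he).1, mapInv_map hy.2]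

theorem collarHomotopy_of_norm_eq_one (hF : ∀ x ∈ U, F x 0 = x) {j : K.cell m}
    {y : EuclideanSpace ℝ (Fin m)} (hy : ‖y‖ = 1) (hyU : K.map m j y ∈ U) (t : I) :
    K.collarHomotopy F j y t = F (K.map m j y) (secondHalf t) := by
  rw [collarHomotopy, hy, inv_one, one_smul, AffineMap.lineMap_same_apply]
  split_ifs with ht
  · rw [secondHalf_of_le_half ht, hF _ hyU]
  · rfl

theorem extendHomotopy_map_of_mem_closedBall (hU : U ⊆ K.skeleton M) (hF : ∀ x ∈ U, F x 0 = x)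
    {j : K.cell (M + 1)} {y : EuclideanSpace ℝ (Fin (M + 1))}
    (hy : y ∈ K.collar U j ∩ closedBall 0 1) (t : I) :
    K.extendHomotopy F (M + 1) U (K.map (M + 1) j y) t = K.collarHomotopy F j y t := by
  obtain ⟨hyc, hy⟩ := hy
  rw [← ball_union_sphere] at hy
  rcases hy with hy | hy
  · exact extendHomotopy_map ⟨hyc, hy⟩ t
  · rw [mem_sphere_zero_iff_norm] at hy
    have hyU : K.map (M + 1) j y ∈ U := by simpa [hy] using hyc.2
    rw [extendHomotopy_of_mem hU hyU, collarHomotopy_of_norm_eq_one hF hy hyU]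

theorem continuousOn_collarHomotopy (hFc : ContinuousOn (uncurry F) (U ×ˢ univ))
    (hF0 : ∀ x ∈ U, F x 0 = x) (j : K.cell m) :
    ContinuousOn (fun q : EuclideanSpace ℝ (Fin m) × I => K.collarHomotopy F j q.1 q.2)
      ((K.collar U j ∩ closedBall 0 1) ×ˢ univ) := by
  have hne : ∀ q ∈ (K.collar U j ∩ closedBall 0 1) ×ˢ (univ : Set I), ‖q.1‖ ≠ 0 :=
    fun q hq => norm_ne_zero_iff.2 (ne_zero_of_mem_collar hq.1.1)
  refine ContinuousOn.if_le ?_ ?_ (continuous_subtype_val.comp continuous_snd) continuous_const ?_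
  · refine (K.continuousOn m j).comp ?_ fun q hq => (convex_closedBall 0 1).lineMap_mem hq.1.1.2
      (inv_norm_smul_mem_unitClosedBall _)
      ⟨mul_nonneg zero_le_two q.2.2.1, by linarith [hq.2.out]⟩
    exact continuousOn_fst.lineMap (((continuousOn_fst.norm.inv₀ fun q hq => hne q hq.1)).smul
      continuousOn_fst) (by fun_prop)
  · refine hFc.comp (((continuousOn_map_inv_norm_smul j).comp continuousOn_fst
      fun q hq => ne_zero_of_mem_collar hq.1.1.1).prodMk
      (continuous_secondHalf.comp continuous_snd).continuousOn) fun q hq => ⟨hq.1.1.1.2, trivial⟩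
  · intro q hq ht
    rw [ht, mul_one_div_cancel two_ne_zero, AffineMap.lineMap_apply_one,
      secondHalf_of_le_half ht.le, hF0 _ hq.1.1.2]

variable [T2Space X]

theorem exists_isOpen_extendNbhd_eq (hfin : Finite (Σ n, K.cell n)) {O : Set X}
    (hO : IsOpen O) :
    ∃ O', IsOpen O' ∧ K.extendNbhd (M + 1) (O ∩ K.skeleton M) = O' ∩ K.skeleton (M + 1) := by
  refine exists_isOpen_eq_inter_skeleton hfin (extendNbhd_subset_skeleton inter_subset_right)
    fun k hk j => ?_
  rcases hk.lt_or_eq with hk | rfl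
  · obtain ⟨G, hG, hGO⟩ := continuousOn_iff'.1 (K.continuousOn k j) O hO
    refine ⟨G, hG, ?_⟩
    rw [preimage_extendNbhd_of_le (Nat.le_of_lt_succ hk), ← hGO]
    ext y
    exact and_congr_left fun hy =>
      and_iff_left (closedCell_subset_skeleton (Nat.le_of_lt_succ hk) ⟨y, hy, rfl⟩)
  · exact ⟨_, isOpen_collar hO j, preimage_extendNbhd inter_subset_right j⟩

theorem isDeformationInto_extendNbhd (hfin : Finite (Σ n, K.cell n)) {A : Set X}
    (hU : U ⊆ K.skeleton M) (hF : IsDeformationInto F U A) :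
    IsDeformationInto (K.extendHomotopy F (M + 1) U) (K.extendNbhd (M + 1) U) A where
  subset := hF.subset.trans subset_union_left
  continuousOn := by
    refine continuousOn_of_skeleton hfin (extendNbhd_subset_skeleton hU) fun k hk j => ?_
    rcases hk.lt_or_eq with hk | rfl
    · rw [preimage_extendNbhd_of_le (Nat.le_of_lt_succ hk)]
      refine (hF.continuousOn.comp (((K.continuousOn k j).comp continuousOn_fst
        fun q hq => hq.1.2).prodMk (continuous_secondHalf.comp continuous_snd).continuousOn)
        fun q hq => ⟨hq.1.1, trivial⟩).congr fun q hq => extendHomotopy_of_mem hU hq.1.1 q.2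
    · rw [preimage_extendNbhd hU j]
      exact (continuousOn_collarHomotopy hF.continuousOn hF.map_zero j).congr fun q hq =>
        extendHomotopy_map_of_mem_closedBall hU hF.map_zero hq.1 q.2
  map_zero := by
    rintro x (hx | hx)
    · rw [extendHomotopy_of_mem hU hx, secondHalf_of_le_half (by norm_num), hF.map_zero x hx]
    · obtain ⟨j, y, hy, rfl⟩ := mem_iUnion.1 hx
      simp [extendHomotopy_map hy, collarHomotopy]
  map_one_mem := by
    rintro x (hx | hx)
    · rw [extendHomotopy_of_mem hU hx, secondHalf_one]
      exact hF.map_one_mem x hx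
    · obtain ⟨j, y, hy, rfl⟩ := mem_iUnion.1 hx
      rw [extendHomotopy_map hy, collarHomotopy, if_neg (by norm_num), secondHalf_one]
      exact hF.map_one_mem _ hy.1.2
  map_of_mem x hx t := by
    rw [extendHomotopy_of_mem hU (hF.subset hx), hF.map_of_mem x hx]

theorem exists_isDeformationInto_openCell (hfin : Finite (Σ n, K.cell n)) {n : ℕ}
    (i : K.cell n) {m : ℕ} (hm : n ≤ m) :
    ∃ O, IsOpen O ∧ ∃ F, IsDeformationInto F (O ∩ K.skeleton m) (K.openCell n i) := by
  induction m, hm using Nat.le_induction with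
  | base =>
    obtain ⟨O, hO, hOe⟩ := exists_isOpen_openCell_eq_inter_skeleton hfin i
    refine ⟨O, hO, fun x _ => x, ?_⟩
    rw [← hOe]
    exact isDeformationInto_self _
  | succ M _ ih =>
    obtain ⟨O, hO, F, hF⟩ := ih
    obtain ⟨O', hO', hO'eq⟩ := exists_isOpen_extendNbhd_eq hfin (M := M) hO
    refine ⟨O', hO', K.extendHomotopy F (M + 1) (O ∩ K.skeleton M), ?_⟩
    rw [← hO'eq]
    exact isDeformationInto_extendNbhd hfin inter_subset_right hF

end Collar

end ClassicalCWComplex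

/-- In a finite CW complex, the partition by open cells has the NDR
property: every open cell is a neighborhood deformation retract. -/
theorem stmt5 {X : Type*} [TopologicalSpace X] [T2Space X]
    (K : ClassicalCWComplex X) (hfin : Finite (Σ n, K.cell n)) :
    ∀ (n : ℕ) (i : K.cell n),
      ∃ U : Set X, IsOpen U ∧ K.openCell n i ⊆ U ∧
        ∃ H : U × unitInterval → X, Continuous H ∧
          (∀ u : U, H (u, 0) = u) ∧
          (∀ u : U, H (u, 1) ∈ K.openCell n i) ∧
          (∀ u : U, (u : X) ∈ K.openCell n i → ∀ t : unitInterval, H (u, t) = u) := by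
  intro n i
  obtain ⟨N, hN⟩ := K.exists_skeleton_eq_univ hfin
  obtain ⟨O, hO, F, hF⟩ := K.exists_isDeformationInto_openCell hfin i (le_max_left n N)
  have hsk : K.skeleton (max n N) = univ :=
    eq_univ_of_univ_subset (hN ▸ K.skeleton_mono (le_max_right n N))
  rw [hsk, inter_univ] at hF
  exact ⟨O, hO, hF.subset, fun p => F p.1 p.2,
    hF.continuousOn.comp_continuous (f := fun p : O × I => ((p.1 : X), p.2)) (by fun_prop)
      fun p => ⟨p.1.2, trivial⟩,
    fun u => hF.map_zero u u.2, fun u => hF.map_one_mem u u.2, fun u hu => hF.map_of_mem u hu⟩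
end
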